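/- Let θ ∈ ℝ with sin θ ≠ 0, set [m] := sin(mθ)/sin θ for m ∈ ℤ and μ(s,t) := [s][t][s−t][s+t]. Let s, t ∈ ℤ be such that [s+t], [s+t+1], [s+t−1], [s−t], [s−t+1], [s−t+2], μ(s,t), μ(s+1,t), μ(s,t−1) and μ(s+1,t−1) are all strictly positive. Define the real 2×2 matrices U := (1/[s+t]) · [[ [s+t+1], √([s+t+1][s+t−1]) ], [ √([s+t+1][s+t−1]), [s+t−1] ]] and B := [[ ([s+t+1]/[s+t])·√(μ(s+1,t−1)/μ(s,t)), (√([s−t][s−t+2])/[s−t+1])·√(μ(s+1,t)·μ(s,t−1))/μ(s,t) ], [ (√([s−t][s−t+2])/[s−t+1])·√(μ(s+1,t)·μ(s,t−1))/μ(s,t), ([s+t−1]/[s+t])·√(μ(s+1,t−1)/μ(s,t)) ]]. Then U·B = [2]·B. -/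

import Mathlib

/-!
`U` is `1/[s+t]` times the rank-one matrix `v vᵀ` with `v = (√[s+t+1], √[s+t-1])`, so
`U² = ([s+t+1] + [s+t-1]) / [s+t] • U = [2] • U`. Moreover `B = √(μ(s+1,t-1)/μ(s,t)) • U`:
the diagonal entries agree on sight, and the off-diagonal ones because their squares agree by a
polynomial identity between quantum integers. Hence `U B = [2] B`.
-/

/-- Trigonometric quantum integer `[m] = sin(mθ)/sin θ`. -/
noncomputable def qit (θ : ℝ) (m : ℤ) : ℝ := Real.sin (m * θ) / Real.sin θ

/-- Frobenius–Perron weight `μ(s,t) = [s][t][s−t][s+t]`. -/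
noncomputable def fpw (θ : ℝ) (s t : ℤ) : ℝ :=
  qit θ s * qit θ t * qit θ (s - t) * qit θ (s + t)

/-- The U-cell matrix U^a_{a+ε₁+ε₋₂}. -/
noncomputable def Umat (θ : ℝ) (s t : ℤ) : Matrix (Fin 2) (Fin 2) ℝ :=
  (1 / qit θ (s + t)) •
    !![qit θ (s + t + 1), Real.sqrt (qit θ (s + t + 1) * qit θ (s + t - 1));
       Real.sqrt (qit θ (s + t + 1) * qit θ (s + t - 1)), qit θ (s + t - 1)]

/-- The B-cell matrix B_{a,_,a+ε₁+ε₋₂,_} (up to normalisation). -/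
noncomputable def Bmat (θ : ℝ) (s t : ℤ) : Matrix (Fin 2) (Fin 2) ℝ :=
  !![(qit θ (s + t + 1) / qit θ (s + t)) *
        Real.sqrt (fpw θ (s + 1) (t - 1) / fpw θ s t),
     (Real.sqrt (qit θ (s - t) * qit θ (s - t + 2)) / qit θ (s - t + 1)) *
        Real.sqrt (fpw θ (s + 1) t * fpw θ s (t - 1)) / fpw θ s t;
     (Real.sqrt (qit θ (s - t) * qit θ (s - t + 2)) / qit θ (s - t + 1)) *
        Real.sqrt (fpw θ (s + 1) t * fpw θ s (t - 1)) / fpw θ s t,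
     (qit θ (s + t - 1) / qit θ (s + t)) *
        Real.sqrt (fpw θ (s + 1) (t - 1) / fpw θ s t)]

open Real

lemma qit_two_mul (θ : ℝ) (n : ℤ) : qit θ 2 * qit θ n = qit θ (n + 1) + qit θ (n - 1) := by
  unfold qit
  rcases eq_or_ne (sin θ) 0 with hθ | hθ
  · simp [hθ]
  push_cast
  rw [add_mul, sub_mul, one_mul, sin_add, sin_sub, sin_two_mul]
  field_simp
  ring

lemma fpw_cross_identity (θ : ℝ) (s t : ℤ) :
    qit θ (s - t) * qit θ (s - t + 2) * (fpw θ (s + 1) t * fpw θ s (t - 1)) * qit θ (s + t) ^ 2 =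
      qit θ (s - t + 1) ^ 2 * (qit θ (s + t + 1) * qit θ (s + t - 1)) *
        (fpw θ (s + 1) (t - 1) * fpw θ s t) := by
  simp only [fpw, show s + 1 - t = s - t + 1 by ring, show s + 1 + t = s + t + 1 by ring,
    show s - (t - 1) = s - t + 1 by ring, show s + (t - 1) = s + t - 1 by ring,
    show s + 1 - (t - 1) = s - t + 2 by ring, show s + 1 + (t - 1) = s + t by ring]
  ring

lemma sqrt_div_eq_sqrt_div {x y c d : ℝ} (hc : 0 < c) (hd : 0 < d) (h : x * d ^ 2 = y * c ^ 2) :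
    √x / c = √y / d := by
  rw [← sqrt_sq hc.le, ← sqrt_sq hd.le, ← sqrt_div' _ (sq_nonneg c),
    ← sqrt_div' _ (sq_nonneg d), (div_eq_div_iff (by positivity) (by positivity)).mpr h]

lemma rankOne_sqrt_mul_self {a b : ℝ} (hab : 0 ≤ a * b) :
    !![a, √(a * b); √(a * b), b] * !![a, √(a * b); √(a * b), b] =
      (a + b) • !![a, √(a * b); √(a * b), b] := by
  rw [Matrix.mul_fin_two, Matrix.smul_of]
  simp only [Matrix.smul_cons, smul_eq_mul, Matrix.smul_empty, ← sq, sq_sqrt hab]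
  congr 1
  ring_nf

lemma Umat_mul_self (θ : ℝ) (s t : ℤ) (hP : qit θ (s + t) ≠ 0)
    (hab : 0 ≤ qit θ (s + t + 1) * qit θ (s + t - 1)) :
    Umat θ s t * Umat θ s t = qit θ 2 • Umat θ s t := by
  rw [Umat, smul_mul_smul, rankOne_sqrt_mul_self hab, smul_smul, smul_smul, ← qit_two_mul]
  congr 1
  field_simp

lemma Bmat_offDiag_eq (θ : ℝ) (s t : ℤ) (hP : 0 < qit θ (s + t))
    (hab : 0 ≤ qit θ (s + t + 1) * qit θ (s + t - 1)) (hd : 0 < qit θ (s - t))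
    (hd₁ : 0 < qit θ (s - t + 1)) (hd₂ : 0 < qit θ (s - t + 2)) (hμ : 0 < fpw θ s t) :
    (√(qit θ (s - t) * qit θ (s - t + 2)) / qit θ (s - t + 1)) *
        √(fpw θ (s + 1) t * fpw θ s (t - 1)) / fpw θ s t =
      √(fpw θ (s + 1) (t - 1) / fpw θ s t) *
        ((qit θ (s + t))⁻¹ * √(qit θ (s + t + 1) * qit θ (s + t - 1))) := by
  calc _ = √(qit θ (s - t) * qit θ (s - t + 2) * (fpw θ (s + 1) t * fpw θ s (t - 1))) /
        (qit θ (s - t + 1) * fpw θ s t) := by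
        rw [sqrt_mul (mul_pos hd hd₂).le]; ring
    _ = √(fpw θ (s + 1) (t - 1) / fpw θ s t * (qit θ (s + t + 1) * qit θ (s + t - 1))) /
        qit θ (s + t) := by
        refine sqrt_div_eq_sqrt_div (by positivity) hP ?_
        rw [fpw_cross_identity]
        field_simp
    _ = _ := by rw [sqrt_mul' _ hab]; ring

lemma Bmat_eq_smul_Umat (θ : ℝ) (s t : ℤ) (hP : 0 < qit θ (s + t))
    (hab : 0 ≤ qit θ (s + t + 1) * qit θ (s + t - 1)) (hd : 0 < qit θ (s - t))
    (hd₁ : 0 < qit θ (s - t + 1)) (hd₂ : 0 < qit θ (s - t + 2)) (hμ : 0 < fpw θ s t) :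
    Bmat θ s t = √(fpw θ (s + 1) (t - 1) / fpw θ s t) • Umat θ s t := by
  have hoff := Bmat_offDiag_eq θ s t hP hab hd hd₁ hd₂ hμ
  ext i j
  fin_cases i <;> fin_cases j <;>
    simp only [Bmat, Umat, hoff, one_div, Matrix.smul_apply, Matrix.smul_of, Matrix.smul_cons,
      smul_eq_mul, Matrix.smul_empty, Matrix.of_apply, Matrix.cons_val', Matrix.cons_val_zero,
      Matrix.cons_val_one, Matrix.cons_val_fin_one, Fin.isValue, Fin.zero_eta, Fin.mk_one] <;>
    ring

theorem braid_absorption_eps1_epsMinus2_general (θ : ℝ)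
    (s t : ℤ)
    (h1 : 0 < qit θ (s + t)) (h2 : 0 < qit θ (s + t + 1))
    (h3 : 0 < qit θ (s + t - 1)) (h4 : 0 < qit θ (s - t))
    (h5 : 0 < qit θ (s - t + 1)) (h6 : 0 < qit θ (s - t + 2))
    (h7 : 0 < fpw θ s t) :
    Umat θ s t * Bmat θ s t = qit θ 2 • Bmat θ s t := by
  have hab := (mul_pos h2 h3).le
  rw [Bmat_eq_smul_Umat θ s t h1 hab h4 h5 h6 h7, mul_smul_comm, Umat_mul_self θ s t h1.ne' hab,
    smul_comm]

/-- Braid absorption (BA): B is an eigenmatrix of U with eigenvalue [2]. -/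
theorem braid_absorption_eps1_epsMinus2 (θ : ℝ) (hθ : Real.sin θ ≠ 0)
    (s t : ℤ)
    (h1 : 0 < qit θ (s + t)) (h2 : 0 < qit θ (s + t + 1))
    (h3 : 0 < qit θ (s + t - 1)) (h4 : 0 < qit θ (s - t))
    (h5 : 0 < qit θ (s - t + 1)) (h6 : 0 < qit θ (s - t + 2))
    (h7 : 0 < fpw θ s t) (h8 : 0 < fpw θ (s + 1) t)
    (h9 : 0 < fpw θ s (t - 1)) (h10 : 0 < fpw θ (s + 1) (t - 1)) :
    Umat θ s t * Bmat θ s t = qit θ 2 • Bmat θ s t :=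
  braid_absorption_eps1_epsMinus2_general θ s t h1 h2 h3 h4 h5 h6 h7
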